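/- arXiv:hep-th/0408055 — 5 statements merged into one kernel-verified Lean document; each statement's English description precedes it below -/
import Mathlib

section
/- Let K be a field of characteristic zero, let L ∈ K⟦X⟧ be a formal power series whose constant coefficient is nonzero, and let w ∈ K⟦X⟧ be a formal power series with constant coefficient 0 satisfying w = X · (L ∘ w), where L ∘ w denotes substitution of w into L. Then L ∘ w is a unit in K⟦X⟧, and for every integer n ≥ 3 one has (n - 2) · coeff_n((L ∘ w)^(-2)) = -2 · coeff_n(L^(n-2)), where coeff_n denotes the coefficient of X^n. -/
/-!
Lagrange–Bürmann: if `w = X · L(w)`, then `n · [Xⁿ] H(w) = [Xⁿ] (θH · Lⁿ)` for every `H`,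
where `θ = X · d/dX`. The case `H = Xᵏ`, i.e. `n · [Xⁿ] wᵏ = k · [Xⁿ] (Xᵏ Lⁿ)`, is proved by
induction on `n`: the recurrence `wᵏ⁺¹ = X · (Xᵏ L)(w)` expresses `[Xⁿ⁺¹] wᵏ⁺¹` through the
formula at `n`, and `θ` being a derivation closes the step. The general case follows by
linearity. For `H = L⁻²` one has `(n - 2) · θH · Lⁿ = -2 · θ(Lⁿ⁻²)`, whose `n`-th coefficient
is `-2n · [Xⁿ] Lⁿ⁻²`.
-/

open PowerSeries

/-- Substitution (composition) `f ∘ w` of a formal power series `w` with zero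
constant term into a formal power series `f`: since `coeff n (w ^ j) = 0` for
`j > n` when `w` has zero constant term, the coefficient of `X^n` in
`∑_{j≥0} (coeff_j f)·w^j` is the finite sum below. -/
noncomputable def PowerSeries.substComp {K : Type*} [CommRing K]
    (w f : PowerSeries K) : PowerSeries K :=
  PowerSeries.mk fun n =>
    ∑ j ∈ Finset.range (n + 1), PowerSeries.coeff j f * PowerSeries.coeff n (w ^ j)

open Finset

namespace PowerSeries

section Substitution

variable {R : Type*} [CommRing R] {w : R⟦X⟧}

theorem coeff_substComp (f : R⟦X⟧) (n : ℕ) :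
    coeff n (substComp w f) = ∑ j ∈ range (n + 1), coeff j f * coeff n (w ^ j) :=
  coeff_mk _ _

theorem constantCoeff_substComp (f : R⟦X⟧) : constantCoeff (substComp w f) = constantCoeff f := by
  rw [← coeff_zero_eq_constantCoeff_apply, coeff_substComp]
  simp

theorem coeff_pow_eq_zero_of_lt (hw0 : constantCoeff w = 0) {n j : ℕ} (h : n < j) :
    coeff n (w ^ j) = 0 :=
  X_pow_dvd_iff.mp (pow_dvd_pow_of_dvd (X_dvd_iff.mpr hw0) j) n h

theorem substComp_eq_subst (hw0 : constantCoeff w = 0) (f : R⟦X⟧) :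
    substComp w f = f.subst w := by
  ext n
  rw [coeff_substComp, coeff_subst' (.of_constantCoeff_zero' hw0),
    finsum_eq_sum_of_support_subset (s := range (n + 1))]
  · simp only [smul_eq_mul]
  · intro j hj
    rw [Function.mem_support] at hj
    rw [coe_range, Set.mem_Iio, Nat.lt_succ_iff]
    by_contra! h
    exact hj (by rw [coeff_pow_eq_zero_of_lt hw0 h, smul_zero])

theorem substComp_one (hw0 : constantCoeff w = 0) : substComp w (1 : R⟦X⟧) = 1 := by
  rw [substComp_eq_subst hw0, ← coe_substAlgHom (.of_constantCoeff_zero' hw0), map_one]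

theorem substComp_X (hw0 : constantCoeff w = 0) : substComp w (X : R⟦X⟧) = w := by
  rw [substComp_eq_subst hw0, subst_X (.of_constantCoeff_zero' hw0)]

theorem substComp_mul (hw0 : constantCoeff w = 0) (f g : R⟦X⟧) :
    substComp w (f * g) = substComp w f * substComp w g := by
  simp only [substComp_eq_subst hw0, subst_mul (.of_constantCoeff_zero' hw0)]

theorem substComp_pow (hw0 : constantCoeff w = 0) (f : R⟦X⟧) (k : ℕ) :
    substComp w (f ^ k) = substComp w f ^ k := by
  simp only [substComp_eq_subst hw0, subst_pow (.of_constantCoeff_zero' hw0)]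

end Substitution

theorem substComp_inv {K : Type*} [Field K] {w : K⟦X⟧} (hw0 : constantCoeff w = 0) {f : K⟦X⟧}
    (hf : constantCoeff f ≠ 0) : substComp w f⁻¹ = (substComp w f)⁻¹ := by
  rw [eq_inv_iff_mul_eq_one (by rwa [constantCoeff_substComp]), ← substComp_mul hw0,
    PowerSeries.inv_mul_cancel f hf, substComp_one hw0]

section Euler

variable {R : Type*} [CommRing R]

variable (R) in
noncomputable def eulerDerivation : Derivation R R⟦X⟧ R⟦X⟧ := (X : R⟦X⟧) • d⁄dX R

theorem eulerDerivation_apply (f : R⟦X⟧) : eulerDerivation R f = X * d⁄dX R f := rfl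

theorem coeff_eulerDerivation (f : R⟦X⟧) (n : ℕ) :
    coeff n (eulerDerivation R f) = n * coeff n f := by
  rcases n with _ | n
  · simp [eulerDerivation_apply]
  · rw [eulerDerivation_apply, coeff_succ_X_mul, coeff_derivative, mul_comm, Nat.cast_succ]

theorem eulerDerivation_X_pow (k : ℕ) : eulerDerivation R (X ^ k) = k • X ^ k := by
  ext n
  rw [coeff_eulerDerivation, map_nsmul, coeff_X_pow]
  split_ifs with h <;> simp [h]

theorem succ_nsmul_eulerDerivation_X_pow_mul_mul_pow (k n : ℕ) (L : R⟦X⟧) :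
    (n + 1) • (eulerDerivation R (X ^ k * L) * L ^ n)
      = (k * n) • (X ^ k * L ^ (n + 1)) + eulerDerivation R (X ^ k * L ^ (n + 1)) := by
  rw [Derivation.leibniz, Derivation.leibniz, eulerDerivation_X_pow, Derivation.leibniz_pow,
    Nat.add_sub_cancel]
  simp only [smul_eq_mul, nsmul_eq_mul]
  push_cast
  ring

theorem succ_nsmul_eulerDerivation_inv_sq_mul_pow {K : Type*} [Field K] {L : K⟦X⟧}
    (hL : constantCoeff L ≠ 0) (m : ℕ) :
    (m + 1) • (eulerDerivation K (L⁻¹ ^ 2) * L ^ (m + 3))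
      = (-2 : ℤ) • eulerDerivation K (L ^ (m + 1)) := by
  have hLinv : L⁻¹ * L = 1 := PowerSeries.inv_mul_cancel L hL
  simp only [eulerDerivation_apply, Derivation.leibniz_pow, derivative_inv', smul_eq_mul,
    nsmul_eq_mul, zsmul_eq_mul, Nat.add_sub_cancel]
  push_cast
  linear_combination
    (-2 * (m + 1) * X * d⁄dX K L * L ^ m * ((L⁻¹ * L) ^ 2 + L⁻¹ * L + 1)) * hLinv

end Euler

section Lagrange

variable {R : Type*} [CommRing R]

theorem coeff_mul_eq_sum_coeff_X_pow_mul (f g : R⟦X⟧) (n : ℕ) :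
    coeff n (f * g) = ∑ k ∈ range (n + 1), coeff k f * coeff n (X ^ k * g) := by
  rw [coeff_mul, Nat.sum_antidiagonal_eq_sum_range_succ_mk]
  refine sum_congr rfl fun k hk => ?_
  rw [coeff_X_pow_mul', if_pos (Nat.lt_succ_iff.mp (mem_range.mp hk))]

theorem natCast_mul_coeff_substComp_of_coeff_pow {w M : R⟦X⟧} {n : ℕ}
    (h : ∀ k : ℕ, (n : R) * coeff n (w ^ k) = k * coeff n (X ^ k * M)) (H : R⟦X⟧) :
    (n : R) * coeff n (substComp w H) = coeff n (eulerDerivation R H * M) := by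
  rw [coeff_substComp, mul_sum, coeff_mul_eq_sum_coeff_X_pow_mul]
  refine sum_congr rfl fun k _ => ?_
  rw [coeff_eulerDerivation, mul_left_comm, h k]
  ring

variable [IsAddTorsionFree R] {L w : R⟦X⟧}

theorem natCast_mul_coeff_pow_of_eq_X_mul_substComp (hw0 : constantCoeff w = 0)
    (hw : w = X * substComp w L) (n k : ℕ) :
    (n : R) * coeff n (w ^ k) = k * coeff n (X ^ k * L ^ n) := by
  induction n generalizing k with
  | zero => cases k <;> simp
  | succ n ih =>
    rcases k with _ | k
    · simp
    have hrec : w ^ (k + 1) = X * substComp w (X ^ k * L) := by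
      rw [substComp_mul hw0, substComp_pow hw0, substComp_X hw0, pow_succ, mul_left_comm, ← hw]
    rw [hrec, coeff_succ_X_mul, pow_succ', mul_assoc, coeff_succ_X_mul]
    rcases n.eq_zero_or_pos with rfl | hn
    -- the step below cancels a factor `n`, so `n = 0` is read off the constant coefficients
    · rcases k with _ | k <;> simp [coeff_zero_eq_constantCoeff_apply, constantCoeff_substComp]
    apply IsAddTorsionFree.nsmul_right_injective hn.ne'
    have hLB := natCast_mul_coeff_substComp_of_coeff_pow ih (X ^ k * L)
    have hθ := congrArg (coeff n) (succ_nsmul_eulerDerivation_X_pow_mul_mul_pow k n L)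
    rw [map_nsmul, map_add, map_nsmul, coeff_eulerDerivation] at hθ
    simp only [nsmul_eq_mul] at hθ ⊢
    push_cast at hθ ⊢
    linear_combination (n + 1 : R) * hLB + hθ

theorem natCast_mul_coeff_substComp_of_eq_X_mul_substComp (hw0 : constantCoeff w = 0)
    (hw : w = X * substComp w L) (n : ℕ) (H : R⟦X⟧) :
    (n : R) * coeff n (substComp w H) = coeff n (eulerDerivation R H * L ^ n) :=
  natCast_mul_coeff_substComp_of_coeff_pow (natCast_mul_coeff_pow_of_eq_X_mul_substComp hw0 hw n) H

end Lagrange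

end PowerSeries

/-- The Lagrange-Bürmann type coefficient formula used in the paper: if
`w = X · (L ∘ w)` with `L(0) ≠ 0` and `w(0) = 0`, then `L ∘ w` is a unit and
`(n-2) · coeff_n((L∘w)⁻²) = -2 · coeff_n(L^{n-2})` for `n ≥ 3`. -/
theorem lagrange_burmann_inverse_square {K : Type*} [Field K] [CharZero K]
    (L w : PowerSeries K)
    (hL : PowerSeries.constantCoeff L ≠ 0)
    (hw0 : PowerSeries.constantCoeff w = 0)
    (hw : w = PowerSeries.X * PowerSeries.substComp w L) :
    IsUnit (PowerSeries.substComp w L) ∧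
      ∀ n : ℕ, 3 ≤ n →
        ((n : K) - 2) * PowerSeries.coeff n ((PowerSeries.substComp w L)⁻¹ ^ 2)
          = -2 * PowerSeries.coeff n (L ^ (n - 2)) := by
  have hg : constantCoeff (substComp w L) ≠ 0 := by rwa [constantCoeff_substComp]
  refine ⟨isUnit_iff_constantCoeff.mpr hg.isUnit, fun n hn => ?_⟩
  obtain ⟨m, rfl⟩ := Nat.exists_eq_add_of_le' hn
  rw [← substComp_inv hw0 hL, ← substComp_pow hw0, show m + 3 - 2 = m + 1 by omega]
  have hLB := natCast_mul_coeff_substComp_of_eq_X_mul_substComp hw0 hw (m + 3) (L⁻¹ ^ 2)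
  have hθ := congrArg (coeff (m + 3)) (succ_nsmul_eulerDerivation_inv_sq_mul_pow hL m)
  rw [map_nsmul, map_zsmul, coeff_eulerDerivation, nsmul_eq_mul, zsmul_eq_mul] at hθ
  apply mul_left_cancel₀ (Nat.cast_ne_zero.mpr (by omega) : ((m + 3 : ℕ) : K) ≠ 0)
  push_cast at hLB hθ ⊢
  linear_combination (m + 1 : K) * hLB + hθ
end

section
/- Let K be a field of characteristic zero, let L ∈ K⟦X⟧ have nonzero constant coefficient and satisfy coeff_j L = 0 whenever 4 does not divide j, and let w ∈ K⟦X⟧ have constant coefficient 0 and satisfy w = X · (L ∘ w). Then: (i) coeff_n w = 0 unless n ≡ 1 (mod 4); and (ii) coeff_n((L ∘ w)^(-2)) = 0 unless 4 divides n. -/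
open PowerSeries

/-!
Say that a series is supported on `r mod d` if all its nonzero coefficients sit at exponents
`≡ r (mod d)`. Exponents add under multiplication, so supports behave like residues: `f ^ j` is
supported on `j * r`, and if `L` is supported on `0 mod d` then so is `L ∘ w` for any `w` whose
support lies in a single residue class. Since the coefficient of `X ^ n` in `X * (L ∘ w)` only
involves coefficients of `w` below `n`, the equation `w = X * (L ∘ w)` propagates the support
`1 mod d` from the coefficients of `w` below `n` to the one at `n`. Finally the recursion for the
coefficients of an inverse shows that inversion preserves support on `0 mod d`.
-/

namespace PowerSeries

section Semiring

variable {R : Type*} [Semiring R] {d r a b N : ℕ} {f g : R⟦X⟧}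

def SupportedModBelow (d r N : ℕ) (f : R⟦X⟧) : Prop :=
  ∀ n < N, coeff n f ≠ 0 → n ≡ r [MOD d]

def SupportedMod (d r : ℕ) (f : R⟦X⟧) : Prop :=
  ∀ n, coeff n f ≠ 0 → n ≡ r [MOD d]

theorem supportedMod_iff_forall_supportedModBelow :
    SupportedMod d r f ↔ ∀ N, SupportedModBelow d r N f :=
  ⟨fun h _ n _ => h n, fun h n => h (n + 1) n n.lt_succ_self⟩

theorem supportedModBelow_one : SupportedModBelow d 0 N (1 : R⟦X⟧) := by
  intro n _ hn
  obtain rfl : n = 0 := by by_contra h; simp [coeff_one, h] at hn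
  rfl

theorem SupportedModBelow.mul (hf : SupportedModBelow d a N f) (hg : SupportedModBelow d b N g) :
    SupportedModBelow d (a + b) N (f * g) := by
  intro n hn hne
  rw [coeff_mul] at hne
  obtain ⟨p, hp, hpne⟩ := Finset.exists_ne_zero_of_sum_ne_zero hne
  rw [Finset.HasAntidiagonal.mem_antidiagonal] at hp
  have hp₁ : coeff p.1 f ≠ 0 := left_ne_zero_of_mul hpne
  have hp₂ : coeff p.2 g ≠ 0 := right_ne_zero_of_mul hpne
  rw [← hp]
  exact (hf p.1 (by omega) hp₁).add (hg p.2 (by omega) hp₂)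

theorem SupportedModBelow.pow (hf : SupportedModBelow d a N f) (j : ℕ) :
    SupportedModBelow d (j * a) N (f ^ j) := by
  induction j with
  | zero => simpa using supportedModBelow_one
  | succ j ih => simpa [pow_succ, add_mul] using ih.mul hf

theorem SupportedMod.pow (hf : SupportedMod d a f) (j : ℕ) : SupportedMod d (j * a) (f ^ j) :=
  supportedMod_iff_forall_supportedModBelow.2 fun N =>
    (supportedMod_iff_forall_supportedModBelow.1 hf N).pow j

theorem SupportedModBelow.X_mul (hf : SupportedModBelow d r N f) :
    SupportedModBelow d (r + 1) (N + 1) (X * f) := by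
  rintro (_ | n) hn hne
  · simp at hne
  · rw [coeff_succ_X_mul] at hne
    exact (hf n (by omega) hne).add_right 1

end Semiring

section CommRing

variable {R : Type*} [CommRing R] {d r N : ℕ} {w L : R⟦X⟧}

theorem SupportedModBelow.substComp (hL : SupportedMod d 0 L) (hw : SupportedModBelow d r N w) :
    SupportedModBelow d 0 N (w.substComp L) := by
  intro n hn hne
  rw [PowerSeries.substComp, coeff_mk] at hne
  obtain ⟨j, -, hjne⟩ := Finset.exists_ne_zero_of_sum_ne_zero hne
  have hdj : d ∣ j := (Nat.modEq_zero_iff_dvd).1 (hL j (left_ne_zero_of_mul hjne))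
  exact ((hw.pow j) n hn (right_ne_zero_of_mul hjne)).trans
    ((Nat.modEq_zero_iff_dvd).2 (dvd_mul_of_dvd_left hdj r))

theorem SupportedMod.substComp (hL : SupportedMod d 0 L) (hw : SupportedMod d r w) :
    SupportedMod d 0 (w.substComp L) :=
  supportedMod_iff_forall_supportedModBelow.2 fun N =>
    (supportedMod_iff_forall_supportedModBelow.1 hw N).substComp hL

theorem supportedMod_of_eq_X_mul_substComp (hL : SupportedMod d 0 L)
    (hw : w = X * w.substComp L) : SupportedMod d 1 w := by
  refine supportedMod_iff_forall_supportedModBelow.2 fun N => ?_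
  induction N with
  | zero => exact fun n hn => absurd hn n.not_lt_zero
  | succ N ih => simpa [← hw] using (ih.substComp hL).X_mul

end CommRing

theorem SupportedMod.inv {K : Type*} [Field K] {d : ℕ} {f : K⟦X⟧} (hf : SupportedMod d 0 f) :
    SupportedMod d 0 f⁻¹ := by
  intro n
  induction n using Nat.strong_induction_on with
  | _ n ih =>
    intro hne
    rw [coeff_inv] at hne
    split_ifs at hne with hn
    · exact hn ▸ rfl
    obtain ⟨p, hp, hpne⟩ := Finset.exists_ne_zero_of_sum_ne_zero (right_ne_zero_of_mul hne)
    rw [Finset.HasAntidiagonal.mem_antidiagonal] at hp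
    split_ifs at hpne with hlt
    · rw [← hp]
      exact (hf p.1 (left_ne_zero_of_mul hpne)).add (ih p.2 hlt (right_ne_zero_of_mul hpne))
    · exact absurd rfl hpne

end PowerSeries

theorem support_mod_four_general {K : Type*} [Field K]
    (L w : PowerSeries K)
    (hLsupp : ∀ j : ℕ, ¬ (4 ∣ j) → PowerSeries.coeff j L = 0)
    (hw : w = PowerSeries.X * PowerSeries.substComp w L) :
    (∀ n : ℕ, ¬ (n % 4 = 1) → PowerSeries.coeff n w = 0) ∧
      ∀ n : ℕ, ¬ (4 ∣ n) →
        PowerSeries.coeff n ((PowerSeries.substComp w L)⁻¹ ^ 2) = 0 := by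
  have hL : SupportedMod 4 0 L := fun j hj =>
    (Nat.modEq_zero_iff_dvd).2 (not_not.1 (mt (hLsupp j) hj))
  have hw₁ : SupportedMod 4 1 w := supportedMod_of_eq_X_mul_substComp hL hw
  have hU : SupportedMod 4 0 ((w.substComp L)⁻¹ ^ 2) := (hL.substComp hw₁).inv.pow 2
  exact ⟨fun n hn => by_contra fun h => hn (hw₁ n h),
    fun n hn => by_contra fun h => hn ((Nat.modEq_zero_iff_dvd).1 (hU n h))⟩

/-- Support property of the double-scaled saddle point: if `L` is a power series
in `X⁴` with nonzero constant term and `w = X · (L ∘ w)` with `w(0) = 0`, then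
`w` is supported on exponents `≡ 1 (mod 4)` and `(L ∘ w)⁻²` is supported on
exponents divisible by `4`. -/
theorem support_mod_four {K : Type*} [Field K] [CharZero K]
    (L w : PowerSeries K)
    (hL : PowerSeries.constantCoeff L ≠ 0)
    (hLsupp : ∀ j : ℕ, ¬ (4 ∣ j) → PowerSeries.coeff j L = 0)
    (hw0 : PowerSeries.constantCoeff w = 0)
    (hw : w = PowerSeries.X * PowerSeries.substComp w L) :
    (∀ n : ℕ, ¬ (n % 4 = 1) → PowerSeries.coeff n w = 0) ∧
      ∀ n : ℕ, ¬ (4 ∣ n) →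
        PowerSeries.coeff n ((PowerSeries.substComp w L)⁻¹ ^ 2) = 0 :=
  support_mod_four_general L w hLsupp hw
end

section
/- Let R be a commutative ring, g : ℕ → R, and let m ≥ 1 and h ≥ 1 be integers. Then Σ_{w : Fin m → ℕ, all w_j ≥ 1, Σ_j w_j = h} ∏_{j=1}^{m} g(w_j) = Σ_{ν : Fin h → ℕ (indexed by k = 1,…,h), Σ_k k·ν_k = h and Σ_k ν_k = m} (m! / ∏_{k=1}^{h} ν_k!) · ∏_{k=1}^{h} g(k)^(ν_k), where m! / ∏_k ν_k! is the (integer) multinomial coefficient, cast into R. -/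
/-!
Both sides are the coefficient of `X ^ h` in `(∑_{k=1}^h g(k) X^k) ^ m`. Expanding the power as a
product of `m` factors yields one term per composition of `h` into `m` positive parts; the
multinomial theorem instead groups these terms by the multiplicity `ν_k` of each part `k`.
-/

open Finset Polynomial

namespace Polynomial

variable {R ι : Type*} [CommSemiring R]

lemma prod_C_mul_X_pow (t : Finset ι) (a : ι → R) (b : ι → ℕ) :
    ∏ i ∈ t, C (a i) * X ^ b i = C (∏ i ∈ t, a i) * X ^ ∑ i ∈ t, b i := by
  rw [prod_mul_distrib, map_prod, prod_pow_eq_pow_sum]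

lemma coeff_sum_C_mul_X_pow_pow_eq_sum_tuples (s : Finset ι) (f : ι → R) (e : ι → ℕ)
    (m n : ℕ) :
    ((∑ i ∈ s, C (f i) * X ^ e i) ^ m).coeff n =
      ∑ w ∈ (Fintype.piFinset fun _ : Fin m => s).filter (fun w => ∑ j, e (w j) = n),
        ∏ j, f (w j) := by
  rw [← Fin.prod_const, prod_univ_sum, finsetSum_coeff, sum_filter]
  refine sum_congr rfl fun w _ => ?_
  rw [prod_C_mul_X_pow, coeff_C_mul_X_pow]
  exact if_congr eq_comm rfl rfl

lemma coeff_sum_C_mul_X_pow_pow_eq_sum_multinomial [DecidableEq ι] (s : Finset ι) (f : ι → R)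
    (e : ι → ℕ) (m n : ℕ) :
    ((∑ i ∈ s, C (f i) * X ^ e i) ^ m).coeff n =
      ∑ k ∈ (piAntidiag s m).filter (fun k => ∑ i ∈ s, e i * k i = n),
        (Nat.multinomial s k : R) * ∏ i ∈ s, f i ^ k i := by
  rw [sum_pow_eq_sum_piAntidiag, finsetSum_coeff, sum_filter]
  refine sum_congr rfl fun k _ => ?_
  simp_rw [mul_pow, ← C_pow, ← pow_mul]
  rw [prod_C_mul_X_pow, ← C_eq_natCast, ← mul_assoc, ← C_mul, coeff_C_mul_X_pow]
  exact if_congr (by simp_rw [mul_comm (e _)]; exact eq_comm) rfl rfl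

end Polynomial

lemma Finset.sum_Icc_one_eq_sum_fin {M : Type*} [AddCommMonoid M] (n : ℕ) (F : ℕ → M) :
    ∑ i ∈ Icc 1 n, F i = ∑ k : Fin n, F (k + 1) := by
  rw [Fin.sum_univ_eq_sum_range (fun k => F (k + 1)), range_eq_Ico, sum_Ico_add', zero_add,
    Ico_add_one_right_eq_Icc]

lemma Finset.Nat.filter_antidiagonalTuple_pos (m n : ℕ) :
    (Nat.antidiagonalTuple m n).filter (fun w => ∀ j, 1 ≤ w j) =
      (Fintype.piFinset fun _ : Fin m => Icc 1 n).filter (fun w => ∑ j, w j = n) := by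
  ext w
  simp only [mem_filter, Nat.mem_antidiagonalTuple, Fintype.mem_piFinset, mem_Icc]
  constructor
  · rintro ⟨hsum, hpos⟩
    exact ⟨fun j => ⟨hpos j, hsum ▸ single_le_sum (fun _ _ => Nat.zero_le _) (mem_univ j)⟩, hsum⟩
  · rintro ⟨hw, hsum⟩
    exact ⟨hsum, fun j => (hw j).1⟩

lemma Finset.filter_piAntidiag_univ_fin_eq_filter_piFinset_range (h m n : ℕ) :
    (piAntidiag (univ : Finset (Fin h)) m).filter
        (fun ν => ∑ k : Fin h, ((k : ℕ) + 1) * ν k = n) =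
      (Fintype.piFinset fun _ : Fin h => range (n + 1)).filter
        (fun ν => ∑ k : Fin h, ((k : ℕ) + 1) * ν k = n ∧ ∑ k, ν k = m) := by
  ext ν
  simp only [mem_filter, mem_piAntidiag, Fintype.mem_piFinset, mem_range, mem_univ, implies_true,
    and_true]
  constructor
  · rintro ⟨hm, hn⟩
    refine ⟨fun k => ?_, hn, hm⟩
    calc ν k ≤ ((k : ℕ) + 1) * ν k := Nat.le_mul_of_pos_left _ k.succ_pos
      _ ≤ n := hn ▸ single_le_sum (f := fun k : Fin h => ((k : ℕ) + 1) * ν k)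
          (fun _ _ => Nat.zero_le _) (mem_univ k)
      _ < n + 1 := n.lt_succ_self
  · rintro ⟨-, hn, hm⟩
    exact ⟨hm, hn⟩

theorem partition_reduction_general {R : Type*} [CommRing R] (g : ℕ → R)
    (m h : ℕ) :
    ∑ w ∈ (Finset.Nat.antidiagonalTuple m h).filter (fun w => ∀ j, 1 ≤ w j),
        ∏ j : Fin m, g (w j)
    = ∑ ν ∈ (Fintype.piFinset fun _ : Fin h => Finset.range (h + 1)) |>.filter
          (fun ν : Fin h → ℕ =>
            ∑ k : Fin h, ((k : ℕ) + 1) * ν k = h ∧ ∑ k : Fin h, ν k = m),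
        ((Nat.factorial m / ∏ k : Fin h, Nat.factorial (ν k) : ℕ) : R) *
          ∏ k : Fin h, g ((k : ℕ) + 1) ^ (ν k) := by
  have key := coeff_sum_C_mul_X_pow_pow_eq_sum_tuples (Icc 1 h) g (fun i => i) m h
  rw [sum_Icc_one_eq_sum_fin h fun i => C (g i) * X ^ i,
    coeff_sum_C_mul_X_pow_pow_eq_sum_multinomial,
    filter_piAntidiag_univ_fin_eq_filter_piFinset_range] at key
  rw [Nat.filter_antidiagonalTuple_pos, ← key]
  refine sum_congr rfl fun ν hν => ?_
  rw [Nat.multinomial, (mem_filter.1 hν).2.2]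

/-- Second combinatorial reduction step of the paper: a sum over ordered
compositions of `h` into exactly `m` positive parts equals a sum over unordered
partitions of `h` into exactly `m` positive parts (encoded by multiplicities
`ν_k` of each part `k ∈ {1,…,h}`), weighted by the multinomial coefficient
`m! / (ν_1! ⋯ ν_h!)`. -/
theorem partition_reduction {R : Type*} [CommRing R] (g : ℕ → R)
    (m h : ℕ) (hm : 1 ≤ m) (hh : 1 ≤ h) :
    ∑ w ∈ (Finset.Nat.antidiagonalTuple m h).filter (fun w => ∀ j, 1 ≤ w j),
        ∏ j : Fin m, g (w j)
    = ∑ ν ∈ (Fintype.piFinset fun _ : Fin h => Finset.range (h + 1)) |>.filter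
          (fun ν : Fin h → ℕ =>
            ∑ k : Fin h, ((k : ℕ) + 1) * ν k = h ∧ ∑ k : Fin h, ν k = m),
        ((Nat.factorial m / ∏ k : Fin h, Nat.factorial (ν k) : ℕ) : R) *
          ∏ k : Fin h, g ((k : ℕ) + 1) ^ (ν k) :=
  partition_reduction_general g m h
end

section
/- Define φ : ℝ → ℝ by φ(x) = ∫_0^∞ t^(-1/2) / (e^(t-x) + 1) dt. Then: (i) the integral converges for every x ∈ ℝ, (ii) φ is continuous and strictly monotonically increasing on ℝ, (iii) φ(x) → 0 as x → -∞ and φ(x) → ∞ as x → +∞. Consequently, for every real μ > 0 there exists a unique x ∈ ℝ with φ(x) = √(π μ). -/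
open Real MeasureTheory Filter

noncomputable def fermiDiracHalf (x : ℝ) : ℝ :=
  ∫ t in Set.Ioi (0 : ℝ), t ^ (-(1 : ℝ) / 2) / (Real.exp (t - x) + 1)

namespace FDaux

noncomputable def f (x t : ℝ) : ℝ := t ^ (-(1:ℝ)/2) / (Real.exp (t - x) + 1)

lemma denom_pos (x t : ℝ) : 0 < Real.exp (t - x) + 1 := by positivity

lemma f_nonneg (x : ℝ) {t : ℝ} (ht : 0 < t) : 0 ≤ f x t := by
  unfold f; positivity

lemma f_le (x : ℝ) {t : ℝ} (ht : 0 < t) :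
    f x t ≤ Real.exp x * (Real.exp (-t) * t ^ ((1/2:ℝ) - 1)) := by
  have hpow : (0:ℝ) < t ^ (-(1:ℝ)/2) := Real.rpow_pos_of_pos ht _
  have h2 : t ^ ((1/2:ℝ) - 1) = t ^ (-(1:ℝ)/2) := by norm_num
  rw [h2]
  have key : 1 / (Real.exp (t - x) + 1) ≤ Real.exp (x - t) := by
    rw [div_le_iff₀ (denom_pos x t)]
    have : Real.exp (x - t) * Real.exp (t - x) = 1 := by
      rw [← Real.exp_add]; simp
    nlinarith [Real.exp_pos (x - t)]
  calc f x t = t ^ (-(1:ℝ)/2) * (1 / (Real.exp (t - x) + 1)) := by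
        unfold f; ring
    _ ≤ t ^ (-(1:ℝ)/2) * Real.exp (x - t) := by
        exact mul_le_mul_of_nonneg_left key hpow.le
    _ = Real.exp x * (Real.exp (-t) * t ^ (-(1:ℝ)/2)) := by
        have h3 : Real.exp (x - t) = Real.exp x * Real.exp (-t) := by
          rw [← Real.exp_add]; ring_nf
        rw [h3]; ring
    _ = _ := by ring

lemma f_mono {x y : ℝ} (hxy : x < y) {t : ℝ} (ht : 0 < t) : f x t < f y t := by
  have hpow : (0:ℝ) < t ^ (-(1:ℝ)/2) := Real.rpow_pos_of_pos ht _
  unfold f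
  apply div_lt_div_of_pos_left hpow (denom_pos y t)
  have := Real.exp_lt_exp.2 (show t - y < t - x by linarith)
  linarith

lemma contOn (x : ℝ) : ContinuousOn (fun t : ℝ => f x t) (Set.Ioi 0) := by
  apply ContinuousOn.div
  · exact fun t ht => (Real.continuousAt_rpow_const t _ (Or.inl (ne_of_gt ht))).continuousWithinAt
  · exact ((Real.continuous_exp.comp (continuous_id.sub continuous_const)).add
      continuous_const).continuousOn
  · exact fun t _ => ne_of_gt (denom_pos x t)

lemma bound_integrable (c : ℝ) :
    IntegrableOn (fun t : ℝ => c * (Real.exp (-t) * t ^ ((1/2:ℝ) - 1))) (Set.Ioi 0) :=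
  (Real.GammaIntegral_convergent (by norm_num : (0:ℝ) < 1/2)).const_mul c

lemma integrableOn (x : ℝ) : IntegrableOn (fun t => f x t) (Set.Ioi 0) := by
  apply Integrable.mono' (bound_integrable (Real.exp x))
  · exact (contOn x).aestronglyMeasurable measurableSet_Ioi
  · filter_upwards [ae_restrict_mem measurableSet_Ioi] with t ht
    rw [Real.norm_of_nonneg (f_nonneg x ht)]
    exact f_le x ht

lemma fd_eq (x : ℝ) : fermiDiracHalf x = ∫ t in Set.Ioi (0:ℝ), f x t := rfl

lemma fd_strictMono : StrictMono fermiDiracHalf := by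
  intro x y hxy
  rw [fd_eq, fd_eq, ← sub_pos, ← integral_sub (integrableOn y) (integrableOn x)]
  rw [setIntegral_pos_iff_support_of_nonneg_ae]
  · rw [show Function.support (fun t => f y t - f x t) ∩ Set.Ioi 0 = Set.Ioi 0 from ?_]
    · simp
    · apply Set.inter_eq_self_of_subset_right
      intro t ht
      exact ne_of_gt (sub_pos.2 (f_mono hxy ht))
  · filter_upwards [ae_restrict_mem measurableSet_Ioi] with t ht
    exact le_of_lt (sub_pos.2 (f_mono hxy ht))
  · exact (integrableOn y).sub (integrableOn x)

lemma fd_nonneg (x : ℝ) : 0 ≤ fermiDiracHalf x := by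
  rw [fd_eq]
  apply setIntegral_nonneg measurableSet_Ioi
  exact fun t ht => f_nonneg x ht

lemma fd_le (x : ℝ) :
    fermiDiracHalf x ≤ Real.exp x * ∫ t in Set.Ioi (0:ℝ), Real.exp (-t) * t ^ ((1/2:ℝ) - 1) := by
  rw [fd_eq, ← integral_const_mul]
  apply setIntegral_mono_on (integrableOn x) (bound_integrable _) measurableSet_Ioi
  exact fun t ht => f_le x ht

lemma fd_continuous : Continuous fermiDiracHalf := by
  rw [continuous_iff_continuousAt]
  intro x₀
  have hsub : Set.Ioo (x₀ - 1) (x₀ + 1) ∈ nhds x₀ :=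
    Ioo_mem_nhds (by linarith) (by linarith)
  apply ContinuousWithinAt.continuousAt _ hsub
  have : ContinuousOn fermiDiracHalf (Set.Ioo (x₀ - 1) (x₀ + 1)) := by
    apply continuousOn_of_dominated
      (bound := fun t => Real.exp (x₀ + 1) * (Real.exp (-t) * t ^ ((1/2:ℝ) - 1)))
    · exact fun x _ => (contOn x).aestronglyMeasurable measurableSet_Ioi
    · intro x hx
      filter_upwards [ae_restrict_mem measurableSet_Ioi] with t ht
      show ‖f x t‖ ≤ _
      rw [Real.norm_of_nonneg (f_nonneg x ht)]
      refine le_trans (f_le x ht) ?_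
      have : Real.exp x ≤ Real.exp (x₀ + 1) := Real.exp_le_exp.2 (le_of_lt hx.2)
      have ht' : (0:ℝ) < t := ht
      have hpos : 0 ≤ Real.exp (-t) * t ^ ((1/2:ℝ) - 1) := by positivity
      exact mul_le_mul_of_nonneg_right this hpos
    · exact bound_integrable _
    · filter_upwards [ae_restrict_mem measurableSet_Ioi] with t ht
      apply Continuous.continuousOn
      apply Continuous.div continuous_const
      · exact (Real.continuous_exp.comp (continuous_const.sub continuous_id)).add
          continuous_const
      · exact fun x => ne_of_gt (denom_pos x t)
  exact this.continuousWithinAt (by constructor <;> linarith)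

lemma fd_atBot : Tendsto fermiDiracHalf atBot (nhds 0) := by
  set C := ∫ t in Set.Ioi (0:ℝ), Real.exp (-t) * t ^ ((1/2:ℝ) - 1)
  have h1 : Tendsto (fun x : ℝ => Real.exp x * C) atBot (nhds 0) := by
    have := (Real.tendsto_exp_atBot).mul_const C
    simpa using this
  apply tendsto_of_tendsto_of_tendsto_of_le_of_le (tendsto_const_nhds (x := (0:ℝ))) h1
  · exact fd_nonneg
  · exact fd_le

lemma fd_ge_sqrt {x : ℝ} (hx : 0 < x) : Real.sqrt x ≤ fermiDiracHalf x := by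
  have key : ∫ t in Set.Ioc (0:ℝ) x, (t ^ (-(1:ℝ)/2) / 2) = Real.sqrt x := by
    rw [← intervalIntegral.integral_of_le hx.le]
    simp only [div_eq_mul_inv]
    rw [intervalIntegral.integral_mul_const]
    rw [integral_rpow (Or.inl (by norm_num))]
    rw [Real.zero_rpow (by norm_num), Real.sqrt_eq_rpow]
    norm_num
  rw [← key, fd_eq]
  have h1 : ∫ t in Set.Ioc (0:ℝ) x, (t ^ (-(1:ℝ)/2) / 2) ≤ ∫ t in Set.Ioc (0:ℝ) x, f x t := by
    apply setIntegral_mono_on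
    · have : IntervalIntegrable (fun t : ℝ => t ^ (-(1:ℝ)/2) / 2) volume 0 x := by
        apply IntervalIntegrable.div_const
        apply intervalIntegral.intervalIntegrable_rpow' (by norm_num : (-1:ℝ) < -(1:ℝ)/2)
      rwa [intervalIntegrable_iff_integrableOn_Ioc_of_le hx.le] at this
    · exact (integrableOn x).mono_set Set.Ioc_subset_Ioi_self
    · exact measurableSet_Ioc
    · intro t ht
      unfold f
      have hpow : (0:ℝ) < t ^ (-(1:ℝ)/2) := Real.rpow_pos_of_pos ht.1 _
      apply div_le_div_of_nonneg_left hpow.le (denom_pos x t)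
      have : Real.exp (t - x) ≤ 1 := Real.exp_le_one_iff.2 (by linarith [ht.2])
      linarith
  refine le_trans h1 ?_
  apply setIntegral_mono_set (integrableOn x)
  · filter_upwards [ae_restrict_mem measurableSet_Ioi] with t ht
    exact f_nonneg x ht
  · exact Filter.Eventually.of_forall Set.Ioc_subset_Ioi_self

lemma fd_atTop : Tendsto fermiDiracHalf atTop atTop := by
  apply tendsto_atTop_mono' atTop (show ∀ᶠ x in atTop, Real.sqrt x ≤ fermiDiracHalf x from ?_)
  · have : Tendsto (fun x : ℝ => Real.sqrt x) atTop atTop := by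
      have h := tendsto_rpow_atTop (show (0:ℝ) < 1/2 by norm_num)
      apply h.congr'
      filter_upwards [eventually_ge_atTop (0:ℝ)] with x hx
      rw [Real.sqrt_eq_rpow]
    exact this
  · filter_upwards [eventually_gt_atTop (0:ℝ)] with x hx
    exact fd_ge_sqrt hx

end FDaux

/-- The saddle-point equation `Li_{1/2}(-z) = -√μ` of `U(N)` Yang-Mills theory
on the torus in the double scaling limit always has a unique solution: the
Fermi-Dirac integral `φ` of index `-1/2` is well defined, continuous, strictly
increasing, tends to `0` at `-∞` and to `∞` at `+∞`, and hence for every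
`μ > 0` there is a unique `x` with `φ(x) = √(πμ)`. -/
theorem fermiDiracHalf_saddle_point :
    (∀ x : ℝ, IntegrableOn
        (fun t : ℝ => t ^ (-(1 : ℝ) / 2) / (Real.exp (t - x) + 1)) (Set.Ioi 0)) ∧
      Continuous fermiDiracHalf ∧
      StrictMono fermiDiracHalf ∧
      Tendsto fermiDiracHalf atBot (nhds 0) ∧
      Tendsto fermiDiracHalf atTop atTop ∧
      ∀ μ : ℝ, 0 < μ → ∃! x : ℝ, fermiDiracHalf x = Real.sqrt (π * μ) := by
  refine ⟨FDaux.integrableOn, FDaux.fd_continuous, FDaux.fd_strictMono, FDaux.fd_atBot,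
    FDaux.fd_atTop, ?_⟩
  intro μ hμ
  set c := Real.sqrt (π * μ) with hc
  have hcpos : 0 < c := Real.sqrt_pos.2 (by positivity)
  obtain ⟨a, ha⟩ := (FDaux.fd_atBot.eventually_lt_const hcpos).exists
  obtain ⟨b, hb⟩ := (FDaux.fd_atTop.eventually (eventually_gt_atTop c)).exists
  have hab : a ≤ b := by
    by_contra h
    push_neg at h
    exact absurd (FDaux.fd_strictMono h) (by linarith)
  obtain ⟨x, _, hx⟩ := intermediate_value_Icc hab FDaux.fd_continuous.continuousOn
    ⟨ha.le, hb.le⟩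
  exact ⟨x, hx, fun y hy => FDaux.fd_strictMono.injective (hy.trans hx.symm)⟩
end

section
/- Let a > 0 be real and N ≥ 1 an integer. Then Σ over all antitone functions l : {1,…,N} → ℤ (i.e. l_1 ≥ l_2 ≥ … ≥ l_N) of exp( -a Σ_{i=1}^N l_i (l_i + N + 1 - 2i) ) = exp( a N(N²-1)/12 ) · Σ over all strictly antitone functions m : {1,…,N} → ℤ (i.e. m_1 > m_2 > … > m_N) of exp( -a Σ_{i=1}^N ( m_i - (N-1)/2 )² ), where both sums converge. -/
open Real

/- Auxiliary lemmas -/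

private lemma sum_range_id_real (n : ℕ) :
    ∑ i ∈ Finset.range n, (i : ℝ) = n * (n - 1) / 2 := by
  induction n with
  | zero => simp
  | succ n ih => rw [Finset.sum_range_succ, ih]; push_cast; ring

private lemma sum_range_sq_real (n : ℕ) :
    ∑ i ∈ Finset.range n, (i : ℝ) ^ 2 = n * (n - 1) * (2 * n - 1) / 6 := by
  induction n with
  | zero => simp
  | succ n ih => rw [Finset.sum_range_succ, ih]; push_cast; ring

private lemma fermi_sum (N : ℕ) :
    ∑ i : Fin N, (((N : ℝ) - 1 - 2 * (i : ℕ)) / 2) ^ 2 = N * ((N : ℝ) ^ 2 - 1) / 12 := by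
  rw [Fin.sum_univ_eq_sum_range (fun i => (((N : ℝ) - 1 - 2 * (i : ℕ)) / 2) ^ 2)]
  have h : ∀ i ∈ Finset.range N, (((N : ℝ) - 1 - 2 * (i : ℕ)) / 2) ^ 2
      = ((N : ℝ) - 1) ^ 2 / 4 - ((N : ℝ) - 1) * (i : ℝ) + (i : ℝ) ^ 2 := by
    intro i _; ring
  rw [Finset.sum_congr rfl h]
  rw [Finset.sum_add_distrib, Finset.sum_sub_distrib, ← Finset.mul_sum,
    Finset.sum_const, Finset.card_range, sum_range_id_real, sum_range_sq_real]
  ring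

/-- Gaussian sums over ℕ are summable. -/
private lemma summable_gauss_nat {a : ℝ} (ha : 0 < a) (c : ℝ) :
    Summable fun n : ℕ => Real.exp (-a * ((n : ℝ) + c) ^ 2) := by
  refine Summable.of_nonneg_of_le (fun n => (Real.exp_pos _).le) (fun n => ?_)
    (Real.summable_exp_neg_nat.mul_left (Real.exp (1 / (4 * a) - c)))
  rw [← Real.exp_add]
  apply Real.exp_le_exp.2
  have h4a : 0 < 4 * a := by linarith
  have ht : 4 * a * (1 / (4 * a)) = 1 := by field_simp
  nlinarith [sq_nonneg (2 * a * ((n : ℝ) + c) - 1), ht, ha, h4a]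

/-- Gaussian sums over ℤ are summable. -/
private lemma summable_gauss_int {a : ℝ} (ha : 0 < a) (c : ℝ) :
    Summable fun n : ℤ => Real.exp (-a * ((n : ℝ) - c) ^ 2) := by
  apply Summable.of_nat_of_neg
  · have := summable_gauss_nat ha (-c)
    apply this.congr
    intro n; push_cast; ring_nf
  · have := summable_gauss_nat ha c
    apply this.congr
    intro n
    push_cast
    congr 1
    ring

/-- Products of a summable nonneg function over `Fin N → ℤ` are summable. -/
private lemma summable_pi_prod (g : ℤ → ℝ) (hg0 : ∀ x, 0 ≤ g x) (hg : Summable g) (N : ℕ) :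
    Summable fun f : Fin N → ℤ => ∏ i, g (f i) := by
  induction N with
  | zero =>
      haveI : Unique (Fin 0 → ℤ) := ⟨⟨fun i => i.elim0⟩, fun f => funext fun i => i.elim0⟩
      exact .of_finite
  | succ N ih =>
      have key : ∀ h : (Fin N → ℤ) → ℝ, (0 : (Fin N → ℤ) → ℝ) ≤ h → Summable h →
          Summable fun p : ℤ × (Fin N → ℤ) => g p.1 * h p.2 :=
        fun h h0 hs => Summable.mul_of_nonneg hg hs hg0 h0
      have hprod : Summable fun p : ℤ × (Fin N → ℤ) => g p.1 * ∏ i, g (p.2 i) :=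
        key (fun f => ∏ i, g (f i))
          (fun f => Finset.prod_nonneg fun i _ => hg0 _) ih
      rw [← (Fin.consEquiv (fun _ : Fin (N + 1) => ℤ)).summable_iff]
      apply hprod.congr
      intro p
      simp only [Fin.consEquiv, Equiv.coe_fn_mk, Function.comp_apply]
      rw [Fin.prod_univ_succ]
      simp

/-- Gap lemma for strictly antitone integer sequences. -/
private lemma strictAnti_gap {n : ℕ} {f : Fin n → ℤ} (hf : StrictAnti f) :
    ∀ i j : Fin n, i ≤ j → f j + (j : ℤ) ≤ f i + (i : ℤ) := by
  have key : ∀ d : ℕ, ∀ i j : Fin n, (j : ℕ) = (i : ℕ) + d →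
      f j + (j : ℤ) ≤ f i + (i : ℤ) := by
    intro d
    induction d with
    | zero =>
        intro i j h
        have : i = j := Fin.ext (by omega)
        subst this
        exact le_refl _
    | succ d ih =>
        intro i j h
        have hj' : (i : ℕ) + d < n := by omega
        set j' : Fin n := ⟨(i : ℕ) + d, hj'⟩ with hj'def
        have h1 : f j + (j : ℤ) ≤ f j' + (j' : ℤ) := by
          have hlt : j' < j := by
            rw [Fin.lt_iff_val_lt_val]; simp [hj'def]; omega
          have := hf hlt
          have hv : (j : ℤ) = (j' : ℤ) + 1 := by
            simp [hj'def]; omega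
          omega
        exact h1.trans (ih i j' (by simp [hj'def]))
  intro i j hij
  exact key ((j : ℕ) - (i : ℕ)) i j (by omega)

/-- The bijection `m i = l i + N - 1 - i` between antitone and strictly antitone
integer sequences. -/
private def fermiEquiv (N : ℕ) :
    { l : Fin N → ℤ // Antitone l } ≃ { m : Fin N → ℤ // StrictAnti m } where
  toFun l := ⟨fun i => l.1 i + ((N : ℤ) - 1 - (i : ℕ)), by
    intro i j hij
    show l.1 j + ((N : ℤ) - 1 - (j : ℕ)) < l.1 i + ((N : ℤ) - 1 - (i : ℕ))
    have h1 : l.1 j ≤ l.1 i := l.2 hij.le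
    have h2 : ((i : ℕ) : ℤ) < ((j : ℕ) : ℤ) := by exact_mod_cast hij
    omega⟩
  invFun m := ⟨fun i => m.1 i - ((N : ℤ) - 1 - (i : ℕ)), by
    intro i j hij
    show m.1 j - ((N : ℤ) - 1 - (j : ℕ)) ≤ m.1 i - ((N : ℤ) - 1 - (i : ℕ))
    have h1 := strictAnti_gap m.2 i j hij
    omega⟩
  left_inv l := by ext i; simp
  right_inv m := by ext i; simp

/-- Equivalence of the heat-kernel (Migdal) representation and the free-fermion
representation of the `U(N)` partition function on the torus: the sum over
irreducible representations of `U(N)`, labelled by antitone integer sequences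
`l₁ ≥ … ≥ l_N` with Casimir `C₂ = ∑ᵢ lᵢ(lᵢ + N + 1 - 2i)`, equals the
Fermi-energy factor `e^{aN(N²-1)/12}` times the sum over strictly antitone
sequences `m₁ > … > m_N` of `e^{-a ∑ᵢ (mᵢ - (N-1)/2)²}`. -/
theorem heat_kernel_eq_free_fermion (a : ℝ) (ha : 0 < a) (N : ℕ) (hN : 1 ≤ N) :
    (Summable fun l : { l : Fin N → ℤ // Antitone l } =>
        Real.exp (-a * ∑ i : Fin N,
          (l.1 i : ℝ) * ((l.1 i : ℝ) + (N : ℝ) + 1 - 2 * ((i : ℕ) + 1)))) ∧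
      (Summable fun m : { m : Fin N → ℤ // StrictAnti m } =>
        Real.exp (-a * ∑ i : Fin N, ((m.1 i : ℝ) - ((N : ℝ) - 1) / 2) ^ 2)) ∧
      ∑' l : { l : Fin N → ℤ // Antitone l },
          Real.exp (-a * ∑ i : Fin N,
            (l.1 i : ℝ) * ((l.1 i : ℝ) + (N : ℝ) + 1 - 2 * ((i : ℕ) + 1)))
        = Real.exp (a * (N : ℝ) * ((N : ℝ) ^ 2 - 1) / 12) *
            ∑' m : { m : Fin N → ℤ // StrictAnti m },
              Real.exp (-a * ∑ i : Fin N, ((m.1 i : ℝ) - ((N : ℝ) - 1) / 2) ^ 2) := by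
  set c : ℝ := ((N : ℝ) - 1) / 2 with hc
  set K : ℝ := a * (N : ℝ) * ((N : ℝ) ^ 2 - 1) / 12 with hK
  set g : { m : Fin N → ℤ // StrictAnti m } → ℝ :=
    fun m => Real.exp (-a * ∑ i : Fin N, ((m.1 i : ℝ) - c) ^ 2) with hgdef
  set f : { l : Fin N → ℤ // Antitone l } → ℝ :=
    fun l => Real.exp (-a * ∑ i : Fin N,
      (l.1 i : ℝ) * ((l.1 i : ℝ) + (N : ℝ) + 1 - 2 * ((i : ℕ) + 1))) with hfdef
  set e := fermiEquiv N with he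
  -- termwise identity
  have hterm : ∀ l : { l : Fin N → ℤ // Antitone l }, f l = Real.exp K * g (e l) := by
    intro l
    have hsum : ∑ i : Fin N, (((e l).1 i : ℝ) - c) ^ 2
        = (∑ i : Fin N, (l.1 i : ℝ) * ((l.1 i : ℝ) + (N : ℝ) + 1 - 2 * ((i : ℕ) + 1)))
          + (N : ℝ) * ((N : ℝ) ^ 2 - 1) / 12 := by
      have hper : ∀ i : Fin N, (((e l).1 i : ℝ) - c) ^ 2
          = (l.1 i : ℝ) * ((l.1 i : ℝ) + (N : ℝ) + 1 - 2 * ((i : ℕ) + 1))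
            + (((N : ℝ) - 1 - 2 * (i : ℕ)) / 2) ^ 2 := by
        intro i
        have h0 : ((e l).1 i) = l.1 i + ((N : ℤ) - 1 - (i : ℕ)) := rfl
        have : (((e l).1 i : ℝ)) = (l.1 i : ℝ) + ((N : ℝ) - 1 - (i : ℕ)) := by
          rw [h0]; push_cast; ring
        rw [this, hc]; ring
      rw [Finset.sum_congr rfl (fun i _ => hper i), Finset.sum_add_distrib, fermi_sum]
    show Real.exp _ = Real.exp K * Real.exp _
    rw [← Real.exp_add, hsum]
    congr 1
    rw [hK]
    ring
  -- summability of g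
  have hgauss := summable_gauss_int ha c
  have hpi := summable_pi_prod (fun x : ℤ => Real.exp (-a * ((x : ℝ) - c) ^ 2))
    (fun x => (Real.exp_pos _).le) hgauss N
  have hg : Summable g := by
    have hsub := hpi.comp_injective
      (Subtype.val_injective : Function.Injective
        ((↑) : { m : Fin N → ℤ // StrictAnti m } → (Fin N → ℤ)))
    apply hsub.congr
    intro m
    simp only [hgdef, Function.comp]
    rw [Finset.mul_sum, Real.exp_sum]
  -- summability of f
  have hf : Summable f := by
    have : Summable (g ∘ e) := hg.comp_injective e.injective
    exact ((this.mul_left (Real.exp K)).congr (fun l => (hterm l).symm))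
  refine ⟨hf, hg, ?_⟩
  calc ∑' l, f l = ∑' l, Real.exp K * g (e l) := tsum_congr hterm
    _ = Real.exp K * ∑' l, g (e l) := tsum_mul_left
    _ = Real.exp K * ∑' m, g m := by rw [e.tsum_eq g]
end
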